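/- Let J: Y → ℝ^p be bounded with sup_y |J(y)|_∞ ≤ 1, let g(θ) be a smooth convex function whose Hessian at θ* + tθ for unit-ℓ₁ vectors θ satisfies the exponential comparison θ'(∇g(θ*+tθ) − ∇g(θ*)) ≥ t e^{-2t} θ'∇²g(θ*)θ for t ≥ 0 (as holds for the weighted log-sum-exp ℓ_n^m). If additionally for all t in an interval [0, t̃] the inequality θ'(∇g(θ*+tθ) − ∇g(θ*)) + (2λ/(ξ+1))|θ_{T^c}|₁ ≤ (2λξ/(ξ+1))|θ_T|₁ holds, where θ ∈ C(ξ,T) with |θ|₁ = 1, and F̄ = F(ξ,T,∇²g(θ*)) satisfies τ := (ξ+1)|T|λ/F̄ < e^{-1}, then t̃ ≤ η/2 where η < 1 solves η e^{-η} = τ. -/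

import Mathlib

/-!
For `t ∈ [0, t̃]`, adding the exponential comparison to the basic cone
inequality, and using `|θ_T|₁ + |θ_{Tᶜ}|₁ = 1`, gives
`t e^{-2t} θ'Hθ ≤ 2λ|θ_T|₁ - 2λ/(ξ+1) ≤ λ(ξ+1)|θ_T|₁²/2`,
while the cone invertibility factor gives `F̄|θ_T|₁² ≤ |T| θ'Hθ`. Hence `2t e^{-2t} ≤ τ = η e^{-η}`,
and since `x ↦ x e^{-x}` is strictly increasing on `[0, 1]`, taking `2t = min 1 (2t̃)` forces
`2t̃ ≤ η`.
-/

noncomputable section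

/-- The cone invertibility factor. -/
def coneCIF {ι : Type*} [Fintype ι] [DecidableEq ι]
    (ξ : ℝ) (T : Finset ι) (Sig : Matrix ι ι ℝ) : ℝ :=
  sInf {x | ∃ θ : ι → ℝ, θ ≠ 0 ∧ (∑ j ∈ Tᶜ, |θ j|) ≤ ξ * ∑ j ∈ T, |θ j| ∧
    x = (∑ k, ∑ l, θ k * Sig k l * θ l) / ((∑ j ∈ T, |θ j|) * (⨆ j, |θ j|))}

open Real Finset

lemma strictMonoOn_mul_exp_neg : StrictMonoOn (fun x : ℝ => x * exp (-x)) (Set.Icc 0 1) := by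
  apply strictMonoOn_of_deriv_pos (convex_Icc 0 1) (by fun_prop)
  intro x hx
  rw [interior_Icc] at hx
  have hderiv : HasDerivAt (fun x : ℝ => x * exp (-x)) (1 * exp (-x) + x * (exp (-x) * (-1))) x :=
    (hasDerivAt_id x).mul ((hasDerivAt_exp (-x)).comp x (hasDerivAt_neg x))
  rw [hderiv.deriv]
  nlinarith [exp_pos (-x), hx.2]

lemma le_of_mul_exp_neg_le {u η : ℝ} (hu : u ≤ 1) (hη : η ∈ Set.Icc (0 : ℝ) 1)
    (h : u * exp (-u) ≤ η * exp (-η)) : u ≤ η := by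
  rcases lt_or_ge u 0 with hu0 | hu0
  · linarith [hη.1]
  · exact (strictMonoOn_mul_exp_neg.le_iff_le ⟨hu0, hu⟩ hη).mp h

section ConeInvertibility

variable {ι : Type*} [Fintype ι] {ξ : ℝ} {T : Finset ι} {θ : ι → ℝ}

lemma sum_abs_le_card_mul_iSup_abs : ∑ j ∈ T, |θ j| ≤ T.card * ⨆ j, |θ j| := by
  rw [← nsmul_eq_mul]
  exact sum_le_card_nsmul _ _ _ fun j _ =>
    le_ciSup (f := fun j => |θ j|) (Set.finite_range _).bddAbove j

variable [DecidableEq ι]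

lemma sum_abs_pos_of_cone (hθ : θ ≠ 0) (hcone : (∑ j ∈ Tᶜ, |θ j|) ≤ ξ * ∑ j ∈ T, |θ j|) :
    0 < ∑ j ∈ T, |θ j| := by
  have hT : 0 ≤ ∑ j ∈ T, |θ j| := sum_nonneg fun j _ => abs_nonneg _
  have hTc : 0 ≤ ∑ j ∈ Tᶜ, |θ j| := sum_nonneg fun j _ => abs_nonneg _
  refine hT.lt_of_ne fun hT0 => hθ ?_
  have htotal : ∑ j, |θ j| = 0 := by
    rw [← sum_add_sum_compl T, ← hT0]
    rw [← hT0] at hcone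
    linarith
  funext j
  exact abs_eq_zero.mp
    ((sum_eq_zero_iff_of_nonneg fun j _ => abs_nonneg _).mp htotal j (mem_univ j))

lemma coneCIF_mul_le {Sig : Matrix ι ι ℝ} (hpos : 0 < coneCIF ξ T Sig) (hθ : θ ≠ 0)
    (hcone : (∑ j ∈ Tᶜ, |θ j|) ≤ ξ * ∑ j ∈ T, |θ j|) :
    coneCIF ξ T Sig * ((∑ j ∈ T, |θ j|) * ⨆ j, |θ j|) ≤ ∑ k, ∑ l, θ k * Sig k l * θ l := by
  have hsup : 0 < ⨆ j, |θ j| := by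
    obtain ⟨j, hj⟩ := Function.ne_iff.mp hθ
    exact (abs_pos.mpr hj).trans_le
      (le_ciSup (f := fun j => |θ j|) (Set.finite_range _).bddAbove j)
  rw [← le_div_iff₀ (mul_pos (sum_abs_pos_of_cone hθ hcone) hsup)]
  -- an unbounded-below set would have the junk infimum `0`
  have hbdd : BddBelow {x | ∃ θ : ι → ℝ, θ ≠ 0 ∧ (∑ j ∈ Tᶜ, |θ j|) ≤ ξ * ∑ j ∈ T, |θ j| ∧
      x = (∑ k, ∑ l, θ k * Sig k l * θ l) / ((∑ j ∈ T, |θ j|) * (⨆ j, |θ j|))} := by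
    by_contra h
    rw [coneCIF, Real.sInf_of_not_bddBelow h] at hpos
    exact lt_irrefl 0 hpos
  exact csInf_le hbdd ⟨θ, hθ, hcone, rfl⟩

lemma coneCIF_mul_sq_le {Sig : Matrix ι ι ℝ} (hpos : 0 < coneCIF ξ T Sig) (hθ : θ ≠ 0)
    (hcone : (∑ j ∈ Tᶜ, |θ j|) ≤ ξ * ∑ j ∈ T, |θ j|) :
    coneCIF ξ T Sig * (∑ j ∈ T, |θ j|) ^ 2 ≤ T.card * ∑ k, ∑ l, θ k * Sig k l * θ l := by
  have hT := sum_abs_pos_of_cone hθ hcone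
  calc coneCIF ξ T Sig * (∑ j ∈ T, |θ j|) ^ 2
      = coneCIF ξ T Sig * (∑ j ∈ T, |θ j|) * ∑ j ∈ T, |θ j| := by ring
    _ ≤ coneCIF ξ T Sig * (∑ j ∈ T, |θ j|) * (T.card * ⨆ j, |θ j|) := by
        gcongr
        exact sum_abs_le_card_mul_iSup_abs
    _ = T.card * (coneCIF ξ T Sig * ((∑ j ∈ T, |θ j|) * ⨆ j, |θ j|)) := by ring
    _ ≤ T.card * ∑ k, ∑ l, θ k * Sig k l * θ l := by
        gcongr
        exact coneCIF_mul_le hpos hθ hcone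

end ConeInvertibility

/-- With `a = |θ_T|₁`, `b = |θ_{Tᶜ}|₁`, `q = θ'Hθ`, `s = |T|` and `E = t e^{-2t}`. -/
lemma mul_le_of_basic_inequality {E q a b ξ lam F s : ℝ} (hξ : 0 < ξ + 1) (hlam : 0 ≤ lam)
    (hE : 0 ≤ E) (ha : 0 < a) (hab : a + b = 1) (hs : 0 ≤ s) (hq : F * a ^ 2 ≤ s * q)
    (h : E * q + 2 * lam / (ξ + 1) * b ≤ 2 * lam * ξ / (ξ + 1) * a) :
    E * F ≤ (ξ + 1) * s * lam / 2 := by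
  have hbasic : E * q ≤ 2 * lam * a - 2 * lam / (ξ + 1) := by
    have hrhs : 2 * lam * ξ / (ξ + 1) * a - 2 * lam / (ξ + 1) * b
        = 2 * lam * a - 2 * lam / (ξ + 1) := by
      rw [show b = 1 - a by linarith]
      field_simp
      ring
    linarith
  -- AM-GM: `2λa ≤ λ(ξ+1)a²/2 + 2λ/(ξ+1)`
  have hamgm : 2 * lam * a - 2 * lam / (ξ + 1) ≤ (ξ + 1) * lam * a ^ 2 / 2 := by
    have hsq : 0 ≤ lam / (ξ + 1) * ((ξ + 1) * a - 2) ^ 2 / 2 := by positivity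
    have hexpand : lam / (ξ + 1) * ((ξ + 1) * a - 2) ^ 2 / 2
        = (ξ + 1) * lam * a ^ 2 / 2 - (2 * lam * a - 2 * lam / (ξ + 1)) := by
      field_simp
      ring
    linarith
  have hchain : E * F * a ^ 2 ≤ (ξ + 1) * s * lam / 2 * a ^ 2 :=
    calc E * F * a ^ 2 = E * (F * a ^ 2) := by ring
      _ ≤ E * (s * q) := by gcongr
      _ = s * (E * q) := by ring
      _ ≤ s * ((ξ + 1) * lam * a ^ 2 / 2) := by gcongr; linarith
      _ = (ξ + 1) * s * lam / 2 * a ^ 2 := by ring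
  exact le_of_mul_le_mul_right hchain (by positivity)

theorem stmt9_general (p : ℕ)
    (θstar : Fin p → ℝ) (ξ lam ttilde : ℝ) (hξ : 1 < ξ) (hlam : 0 < lam)
    (T : Finset (Fin p)) (θ : Fin p → ℝ)
    (grad : (Fin p → ℝ) → Fin p → ℝ)
    (H : Matrix (Fin p) (Fin p) ℝ)
    (hcomp : ∀ v : Fin p → ℝ, (∑ j, |v j|) = 1 → ∀ t : ℝ, 0 ≤ t →
      ∑ j, v j * (grad (θstar + t • v) j - grad θstar j)
        ≥ t * Real.exp (-2 * t) * ∑ k, ∑ l, v k * H k l * v l)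
    (hcone : (∑ j ∈ Tᶜ, |θ j|) ≤ ξ * ∑ j ∈ T, |θ j|)
    (hunit : (∑ j, |θ j|) = 1)
    (httilde : 0 ≤ ttilde)
    (hineq : ∀ t ∈ Set.Icc (0 : ℝ) ttilde,
      ∑ j, θ j * (grad (θstar + t • θ) j - grad θstar j)
        + (2 * lam / (ξ + 1)) * ∑ j ∈ Tᶜ, |θ j|
        ≤ (2 * lam * ξ / (ξ + 1)) * ∑ j ∈ T, |θ j|)
    (Fbar : ℝ) (hF : Fbar = coneCIF ξ T H)
    (τ η : ℝ) (hτ : τ = (ξ + 1) * T.card * lam / Fbar)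
    (hη0 : 0 < η) (hη1 : η < 1) (hηe : η * Real.exp (-η) = τ) :
    ttilde ≤ η / 2 := by
  have hF0 : 0 < Fbar := by
    have hτ0 : 0 < τ := hηe ▸ by positivity
    rw [hτ] at hτ0
    rcases div_pos_iff.mp hτ0 with h | h
    · exact h.2
    · exact absurd h.1 (not_lt.mpr (by positivity))
  have hθ : θ ≠ 0 := by
    rintro rfl
    simp at hunit
  have hsplit : (∑ j ∈ T, |θ j|) + ∑ j ∈ Tᶜ, |θ j| = 1 := by
    rw [sum_add_sum_compl]
    exact hunit
  have hquad := coneCIF_mul_sq_le (hF ▸ hF0) hθ hcone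
  rw [← hF] at hquad
  have hbound : ∀ u, 0 ≤ u → u ≤ 2 * ttilde → u * exp (-u) ≤ τ := by
    intro u hu0 hu
    have ht : u / 2 ∈ Set.Icc 0 ttilde := ⟨by linarith, by linarith⟩
    have hbasic : u / 2 * exp (-2 * (u / 2)) * ∑ k, ∑ l, θ k * H k l * θ l
        + 2 * lam / (ξ + 1) * ∑ j ∈ Tᶜ, |θ j| ≤ 2 * lam * ξ / (ξ + 1) * ∑ j ∈ T, |θ j| := by
      linarith [hcomp θ hunit _ ht.1, hineq _ ht]
    have hE := mul_le_of_basic_inequality (by linarith) hlam.le (by positivity)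
      (sum_abs_pos_of_cone hθ hcone) hsplit (Nat.cast_nonneg _) hquad hbasic
    rw [show -2 * (u / 2) = -u by ring] at hE
    rw [hτ, le_div_iff₀ hF0]
    linarith
  have hmin : min 1 (2 * ttilde) ≤ η :=
    le_of_mul_exp_neg_le (min_le_left _ _) ⟨hη0.le, hη1.le⟩
      (hηe ▸ hbound _ (le_min zero_le_one (by linarith)) (min_le_right _ _))
  linarith [(min_le_iff.mp hmin).resolve_left (not_le.mpr hη1)]

/-- Key step of the estimation-error lemma: under the exponential Hessian comparison
and the basic cone inequality on `[0, t̃]`, if `τ = (ξ+1)|T|λ/F̄ < e⁻¹` then `t̃ ≤ η/2`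
where `η < 1` solves `η e^{−η} = τ`. -/
theorem stmt9 (p : ℕ) (g : (Fin p → ℝ) → ℝ) (hg : ContDiff ℝ 2 g)
    (hconv : ConvexOn ℝ Set.univ g)
    (θstar : Fin p → ℝ) (ξ lam ttilde : ℝ) (hξ : 1 < ξ) (hlam : 0 < lam)
    (T : Finset (Fin p)) (θ : Fin p → ℝ)
    (grad : (Fin p → ℝ) → Fin p → ℝ)
    (hgrad : ∀ x j, grad x j = fderiv ℝ g x (Pi.single j 1 : Fin p → ℝ))
    (H : Matrix (Fin p) (Fin p) ℝ)
    (hH : ∀ k l, H k l = fderiv ℝ (fun x => grad x k) θstar (Pi.single l 1 : Fin p → ℝ))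
    (hcomp : ∀ v : Fin p → ℝ, (∑ j, |v j|) = 1 → ∀ t : ℝ, 0 ≤ t →
      ∑ j, v j * (grad (θstar + t • v) j - grad θstar j)
        ≥ t * Real.exp (-2 * t) * ∑ k, ∑ l, v k * H k l * v l)
    (hcone : (∑ j ∈ Tᶜ, |θ j|) ≤ ξ * ∑ j ∈ T, |θ j|)
    (hunit : (∑ j, |θ j|) = 1)
    (httilde : 0 ≤ ttilde)
    (hineq : ∀ t ∈ Set.Icc (0 : ℝ) ttilde,
      ∑ j, θ j * (grad (θstar + t • θ) j - grad θstar j)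
        + (2 * lam / (ξ + 1)) * ∑ j ∈ Tᶜ, |θ j|
        ≤ (2 * lam * ξ / (ξ + 1)) * ∑ j ∈ T, |θ j|)
    (Fbar : ℝ) (hF : Fbar = coneCIF ξ T H)
    (τ η : ℝ) (hτ : τ = (ξ + 1) * T.card * lam / Fbar) (hτe : τ < Real.exp (-1))
    (hη0 : 0 < η) (hη1 : η < 1) (hηe : η * Real.exp (-η) = τ) :
    ttilde ≤ η / 2 :=
  stmt9_general p θstar ξ lam ttilde hξ hlam T θ grad H hcomp hcone hunit httilde hineq Fbar hF τ η
    hτ hη0 hη1 hηe
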